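/- Let T > 0, m ≥ 0, let A₀, A₁ : ℝ × [0,T] → ℝ be continuous, and let u, v : ℝ × [0,T] → ℂ be C¹ solutions of the Dirac system (∂_t + ∂_x)u = −imv + i(A₀+A₁)u + 2i|v|²u + 2i Re(u v̄)v and (∂_t − ∂_x)v = −imu + i(A₀−A₁)v + 2i|u|²v + 2i Re(u v̄)u. Then for all real numbers a < b and all t ∈ [0,T], ∫_a^b (|u(x,t)|² + |v(x,t)|²) dx ≤ ∫_{a−t}^{b+t} (|u(x,0)|² + |v(x,0)|²) dx. -/

import Mathlib

/-!
The density `ρ = |u|² + |v|²` obeys the conservation law `∂ₜρ + ∂ₓ(|u|² − |v|²) = 0`, since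
the right-hand sides of the system contribute nothing to `Re(ū (∂ₜ + ∂ₓ)u) + Re(v̄ (∂ₜ − ∂ₓ)v)`.
By the Leibniz rule, the charge `F(s) = ∫_{a−t+s}^{b+t−s} ρ(x,s) dx` of the shrinking
light-cone slice has derivative `F'(s) = −2|v(a−t+s,s)|² − 2|u(b+t−s,s)|² ≤ 0`: the
conservation law turns the interior term into boundary fluxes, which partly cancel the
endpoint terms.
-/

open MeasureTheory Set

/-- The Dirac (spinor) part of the Maxwell–Dirac–Thirring–Gross–Neveu system on the
time slab `ℝ × [0,T]`, in null-coordinate form, with all coupling constants equal to `1`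
and mass `m`:
`(∂_t + ∂_x)u = −imv + i(A₀+A₁)u + 2i|v|²u + 2i Re(u v̄)v`,
`(∂_t − ∂_x)v = −imu + i(A₀−A₁)v + 2i|u|²v + 2i Re(u v̄)u`. -/
def DiracSystem (m T : ℝ) (A₀ A₁ : ℝ → ℝ → ℝ) (u v : ℝ → ℝ → ℂ) : Prop :=
  ∀ x : ℝ, ∀ t ∈ Set.Icc (0:ℝ) T,
    (deriv (fun τ => u x τ) t + deriv (fun ξ => u ξ t) x =
      -Complex.I * (m : ℂ) * v x t
      + Complex.I * ((A₀ x t + A₁ x t : ℝ) : ℂ) * u x t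
      + 2 * Complex.I * ((‖v x t‖ ^ 2 : ℝ) : ℂ) * u x t
      + 2 * Complex.I * (((u x t * (starRingEnd ℂ) (v x t)).re : ℝ) : ℂ) * v x t)
    ∧
    (deriv (fun τ => v x τ) t - deriv (fun ξ => v ξ t) x =
      -Complex.I * (m : ℂ) * u x t
      + Complex.I * ((A₀ x t - A₁ x t : ℝ) : ℂ) * v x t
      + 2 * Complex.I * ((‖u x t‖ ^ 2 : ℝ) : ℂ) * v x t
      + 2 * Complex.I * (((u x t * (starRingEnd ℂ) (v x t)).re : ℝ) : ℂ) * u x t)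

open Function

section PartialDerivatives

variable {E : Type*} [NormedAddCommGroup E] [NormedSpace ℝ E] {w : ℝ → ℝ → E}

theorem hasDerivAt_left_of_contDiff (hw : ContDiff ℝ 1 (uncurry w)) (x s : ℝ) :
    HasDerivAt (fun ξ => w ξ s) (fderiv ℝ (uncurry w) (x, s) (1, 0)) x :=
  (hw.differentiable one_ne_zero (x, s)).hasFDerivAt.comp_hasDerivAt
    (f := fun ξ => (ξ, s)) x ((hasDerivAt_id x).prodMk (hasDerivAt_const x s))

theorem hasDerivAt_right_of_contDiff (hw : ContDiff ℝ 1 (uncurry w)) (x s : ℝ) :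
    HasDerivAt (fun τ => w x τ) (fderiv ℝ (uncurry w) (x, s) (0, 1)) s :=
  (hw.differentiable one_ne_zero (x, s)).hasFDerivAt.comp_hasDerivAt s
    ((hasDerivAt_const s x).prodMk (hasDerivAt_id s))

theorem continuous_deriv_right_of_contDiff (hw : ContDiff ℝ 1 (uncurry w)) :
    Continuous fun p : ℝ × ℝ => deriv (fun τ => w p.1 τ) p.2 := by
  simp_rw [fun p : ℝ × ℝ => (hasDerivAt_right_of_contDiff hw p.1 p.2).deriv]
  exact (hw.continuous_fderiv one_ne_zero).clm_apply continuous_const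

end PartialDerivatives

section Leibniz

variable {f f' : ℝ → ℝ → ℝ}

theorem hasFDerivAt_integral_upper_limit_param (hf : Continuous (uncurry f)) (c s₀ : ℝ) :
    HasFDerivAt (fun p : ℝ × ℝ => ∫ x in c..p.1, f x p.2)
      (f c s₀ • ContinuousLinearMap.fst ℝ ℝ ℝ) (c, s₀) := by
  rw [hasFDerivAt_iff_isLittleO, Asymptotics.isLittleO_iff]
  intro ε hε
  obtain ⟨δ, hδ, hclose⟩ := Metric.continuousAt_iff.mp hf.continuousAt ε hε
  filter_upwards [Metric.ball_mem_nhds (c, s₀) hδ] with p hp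
  have hsplit : (∫ x in c..p.1, f x p.2) - (∫ x in c..c, f x s₀)
      - (f c s₀ • ContinuousLinearMap.fst ℝ ℝ ℝ) (p - (c, s₀))
      = ∫ x in c..p.1, (f x p.2 - f c s₀) := by
    rw [intervalIntegral.integral_sub ((hf.uncurry_right p.2).intervalIntegrable _ _)
      intervalIntegrable_const]
    simp [mul_comm]
  -- for `x` between `c` and `p.1`, the point `(x, p.2)` is no farther from `(c, s₀)` than `p`
  have hbound : ∀ x ∈ uIoc c p.1, ‖f x p.2 - f c s₀‖ ≤ ε := fun x hx => by
    have hxc : dist x c ≤ dist p.1 c := by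
      simpa [Real.dist_eq, abs_sub_comm] using
        abs_sub_le_of_uIcc_subset_uIcc (uIcc_subset_uIcc left_mem_uIcc (uIoc_subset_uIcc hx))
    have hclose' : dist (x, p.2) (c, s₀) < δ := by
      rw [Metric.mem_ball, Prod.dist_eq] at hp
      rw [Prod.dist_eq]
      exact lt_of_le_of_lt (max_le_max_right _ hxc) hp
    exact (hclose hclose').le
  calc ‖(∫ x in c..p.1, f x p.2) - (∫ x in c..c, f x s₀)
        - (f c s₀ • ContinuousLinearMap.fst ℝ ℝ ℝ) (p - (c, s₀))‖
      ≤ ε * |p.1 - c| := hsplit ▸ intervalIntegral.norm_integral_le_of_norm_le_const hbound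
    _ ≤ ε * ‖p - (c, s₀)‖ := by
      gcongr
      exact norm_fst_le (p - (c, s₀))

theorem hasDerivAt_integral_upper_limit_param (hf : Continuous (uncurry f)) {φ : ℝ → ℝ}
    {φ' s₀ : ℝ} (hφ : HasDerivAt φ φ' s₀) :
    HasDerivAt (fun s => ∫ x in φ s₀..φ s, f x s) (φ' * f (φ s₀) s₀) s₀ :=
  ((hasFDerivAt_integral_upper_limit_param hf (φ s₀) s₀).comp_hasDerivAt
    (f := fun s => (φ s, s)) s₀ (hφ.prodMk (hasDerivAt_id' (x := s₀)))).congr_deriv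
    (by simp [mul_comm])

theorem hasDerivAt_integral_of_continuous_deriv (hf : Continuous (uncurry f))
    (hf' : Continuous (uncurry f')) (hderiv : ∀ x s, HasDerivAt (f x ·) (f' x s) s)
    (a b s₀ : ℝ) :
    HasDerivAt (fun s => ∫ x in a..b, f x s) (∫ x in a..b, f' x s₀) s₀ := by
  have hK : IsCompact (uIcc a b ×ˢ Icc (s₀ - 1) (s₀ + 1)) := isCompact_uIcc.prod isCompact_Icc
  obtain ⟨M, hM⟩ := hK.exists_bound_of_continuousOn hf'.continuousOn
  refine (intervalIntegral.hasDerivAt_integral_of_dominated_loc_of_deriv_le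
    (bound := fun _ => M)
    (Metric.ball_mem_nhds s₀ one_pos)
    (.of_forall fun s => (hf.uncurry_right s).aestronglyMeasurable)
    ((hf.uncurry_right s₀).intervalIntegrable _ _)
    (hf'.uncurry_right s₀).aestronglyMeasurable
    (.of_forall fun x hx s hs => hM (x, s) ⟨uIoc_subset_uIcc hx, ?_⟩)
    intervalIntegrable_const
    (.of_forall fun x _ s _ => hderiv x s)).2
  rw [Metric.mem_ball, Real.dist_eq, abs_sub_lt_iff] at hs
  constructor <;> linarith

theorem hasDerivAt_integral_of_hasDerivAt_limits (hf : Continuous (uncurry f))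
    (hf' : Continuous (uncurry f')) (hderiv : ∀ x s, HasDerivAt (f x ·) (f' x s) s)
    {α β : ℝ → ℝ} {α' β' s₀ : ℝ} (hα : HasDerivAt α α' s₀) (hβ : HasDerivAt β β' s₀) :
    HasDerivAt (fun s => ∫ x in α s..β s, f x s)
      ((∫ x in α s₀..β s₀, f' x s₀) + β' * f (β s₀) s₀ - α' * f (α s₀) s₀) s₀ := by
  have hint : ∀ s a b, IntervalIntegrable (f · s) volume a b :=
    fun s _ _ => (hf.uncurry_right s).intervalIntegrable _ _
  have hsplit : (fun s => ∫ x in α s..β s, f x s) = fun s =>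
      (∫ x in α s₀..β s₀, f x s) + (∫ x in β s₀..β s, f x s) - ∫ x in α s₀..α s, f x s := by
    funext s
    rw [intervalIntegral.integral_add_adjacent_intervals (hint _ _ _) (hint _ _ _),
      intervalIntegral.integral_interval_sub_left (hint _ _ _) (hint _ _ _)]
  rw [hsplit]
  exact ((hasDerivAt_integral_of_continuous_deriv hf hf' hderiv _ _ s₀).add
    (hasDerivAt_integral_upper_limit_param hf hβ)).sub
    (hasDerivAt_integral_upper_limit_param hf hα)

end Leibniz

open scoped InnerProductSpace ComplexConjugate

theorem inner_add_inner_dirac_rhs_eq_zero (m a₀ a₁ : ℝ) (u v : ℂ) :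
    ⟪u, -Complex.I * (m : ℂ) * v
      + Complex.I * ((a₀ + a₁ : ℝ) : ℂ) * u
      + 2 * Complex.I * ((‖v‖ ^ 2 : ℝ) : ℂ) * u
      + 2 * Complex.I * (((u * conj v).re : ℝ) : ℂ) * v⟫_ℝ
    + ⟪v, -Complex.I * (m : ℂ) * u
      + Complex.I * ((a₀ - a₁ : ℝ) : ℂ) * v
      + 2 * Complex.I * ((‖u‖ ^ 2 : ℝ) : ℂ) * v
      + 2 * Complex.I * (((u * conj v).re : ℝ) : ℂ) * u⟫_ℝ = 0 := by
  simp only [Complex.inner, Complex.mul_re, Complex.mul_im, Complex.add_re, Complex.add_im,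
    Complex.neg_re, Complex.neg_im, Complex.I_re, Complex.I_im, Complex.ofReal_re,
    Complex.ofReal_im, Complex.conj_re, Complex.conj_im, Complex.re_ofNat, Complex.im_ofNat]
  ring

namespace DiracSystem

variable {m T : ℝ} {A₀ A₁ : ℝ → ℝ → ℝ} {u v : ℝ → ℝ → ℂ}

theorem hasDerivAt_flux (hu : ContDiff ℝ 1 (uncurry u)) (hv : ContDiff ℝ 1 (uncurry v))
    (hsol : DiracSystem m T A₀ A₁ u v) {s : ℝ} (hs : s ∈ Icc 0 T) (x : ℝ) :
    HasDerivAt (fun ξ => ‖u ξ s‖ ^ 2 - ‖v ξ s‖ ^ 2)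
      (-(2 * ⟪u x s, deriv (u x ·) s⟫_ℝ + 2 * ⟪v x s, deriv (v x ·) s⟫_ℝ)) x := by
  have hflux := (hasDerivAt_left_of_contDiff hu x s).differentiableAt.hasDerivAt.norm_sq.sub
    (hasDerivAt_left_of_contDiff hv x s).differentiableAt.hasDerivAt.norm_sq
  refine hflux.congr_deriv ?_
  have hzero := inner_add_inner_dirac_rhs_eq_zero m (A₀ x s) (A₁ x s) (u x s) (v x s)
  rw [← (hsol x s hs).1, ← (hsol x s hs).2, inner_add_right, inner_sub_right] at hzero
  linarith

theorem hasDerivAt_integral_lightCone (hu : ContDiff ℝ 1 (uncurry u))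
    (hv : ContDiff ℝ 1 (uncurry v)) (hsol : DiracSystem m T A₀ A₁ u v) (c d : ℝ) {s : ℝ}
    (hs : s ∈ Icc 0 T) :
    HasDerivAt (fun σ => ∫ x in (c + σ)..(d - σ), (‖u x σ‖ ^ 2 + ‖v x σ‖ ^ 2))
      (-(2 * ‖v (c + s) s‖ ^ 2 + 2 * ‖u (d - s) s‖ ^ 2)) s := by
  have hdensity : ∀ x σ, HasDerivAt (fun τ => ‖u x τ‖ ^ 2 + ‖v x τ‖ ^ 2)
      (2 * ⟪u x σ, deriv (u x ·) σ⟫_ℝ + 2 * ⟪v x σ, deriv (v x ·) σ⟫_ℝ) σ := fun x σ =>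
    (hasDerivAt_right_of_contDiff hu x σ).differentiableAt.hasDerivAt.norm_sq.add
      (hasDerivAt_right_of_contDiff hv x σ).differentiableAt.hasDerivAt.norm_sq
  have hρ : Continuous (uncurry fun x σ => ‖u x σ‖ ^ 2 + ‖v x σ‖ ^ 2) :=
    (hu.continuous.norm.pow 2).add (hv.continuous.norm.pow 2)
  have hρ' : Continuous (uncurry fun x σ =>
      2 * ⟪u x σ, deriv (u x ·) σ⟫_ℝ + 2 * ⟪v x σ, deriv (v x ·) σ⟫_ℝ) :=
    (continuous_const.mul (hu.continuous.inner (continuous_deriv_right_of_contDiff hu))).add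
      (continuous_const.mul (hv.continuous.inner (continuous_deriv_right_of_contDiff hv)))
  have hbalance : (∫ x in (c + s)..(d - s),
      (2 * ⟪u x s, deriv (u x ·) s⟫_ℝ + 2 * ⟪v x s, deriv (v x ·) s⟫_ℝ))
      = (‖u (c + s) s‖ ^ 2 - ‖v (c + s) s‖ ^ 2) - (‖u (d - s) s‖ ^ 2 - ‖v (d - s) s‖ ^ 2) := by
    have hftc := intervalIntegral.integral_eq_sub_of_hasDerivAt (a := c + s) (b := d - s)
      (fun x _ => hsol.hasDerivAt_flux hu hv hs x)
      ((hρ'.uncurry_right s).neg.intervalIntegrable _ _)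
    rw [intervalIntegral.integral_neg] at hftc
    linarith
  refine (hasDerivAt_integral_of_hasDerivAt_limits hρ hρ' hdensity
    ((hasDerivAt_id' (x := s)).const_add c)
    ((hasDerivAt_id' (x := s)).const_sub d)).congr_deriv ?_
  rw [hbalance]
  ring

end DiracSystem

theorem local_charge_monotone_general (T m : ℝ)
    (A₀ A₁ : ℝ → ℝ → ℝ)
    (u v : ℝ → ℝ → ℂ)
    (hu : ContDiff ℝ 1 (Function.uncurry u)) (hv : ContDiff ℝ 1 (Function.uncurry v))
    (hsol : DiracSystem m T A₀ A₁ u v) :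
    ∀ a b : ℝ, a < b → ∀ t ∈ Set.Icc (0:ℝ) T,
      (∫ x in a..b, (‖u x t‖ ^ 2 + ‖v x t‖ ^ 2))
        ≤ ∫ x in (a - t)..(b + t), (‖u x 0‖ ^ 2 + ‖v x 0‖ ^ 2) := by
  intro a b _ t ht
  have hderiv : ∀ s ∈ Icc 0 t, HasDerivAt
      (fun σ => ∫ x in (a - t + σ)..(b + t - σ), (‖u x σ‖ ^ 2 + ‖v x σ‖ ^ 2))
      (-(2 * ‖v (a - t + s) s‖ ^ 2 + 2 * ‖u (b + t - s) s‖ ^ 2)) s := fun s hs =>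
    hsol.hasDerivAt_integral_lightCone hu hv _ _ ⟨hs.1, hs.2.trans ht.2⟩
  have hanti := antitoneOn_of_hasDerivWithinAt_nonpos (convex_Icc 0 t)
    (fun s hs => (hderiv s hs).continuousAt.continuousWithinAt)
    (fun s hs => (hderiv s (interior_subset hs)).hasDerivWithinAt)
    (fun s _ => neg_nonpos.mpr (by positivity))
  simpa using hanti ⟨le_rfl, ht.1⟩ ⟨ht.1, le_rfl⟩ ht.1

/-- The local charge is nonincreasing on spatial slices of a backward light cone: for `C¹`
solutions of the Dirac system, for all `a < b` and `t ∈ [0,T]`,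
`∫_a^b (|u(x,t)|² + |v(x,t)|²) dx ≤ ∫_{a−t}^{b+t} (|u(x,0)|² + |v(x,0)|²) dx`. -/
theorem local_charge_monotone (T m : ℝ) (hT : 0 < T) (hm : 0 ≤ m)
    (A₀ A₁ : ℝ → ℝ → ℝ) (hA₀ : Continuous (Function.uncurry A₀))
    (hA₁ : Continuous (Function.uncurry A₁))
    (u v : ℝ → ℝ → ℂ)
    (hu : ContDiff ℝ 1 (Function.uncurry u)) (hv : ContDiff ℝ 1 (Function.uncurry v))
    (hsol : DiracSystem m T A₀ A₁ u v) :
    ∀ a b : ℝ, a < b → ∀ t ∈ Set.Icc (0:ℝ) T,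
      (∫ x in a..b, (‖u x t‖ ^ 2 + ‖v x t‖ ^ 2))
        ≤ ∫ x in (a - t)..(b + t), (‖u x 0‖ ^ 2 + ‖v x 0‖ ^ 2) :=
  local_charge_monotone_general T m A₀ A₁ u v hu hv hsol
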